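/- For every integer k ≥ 1, F(k+1) − F(k) = H(k) / ((k + 1 + B/(1−B)) · (k + B/(1−B))), and the denominator (k + 1 + B/(1−B)) · (k + B/(1−B)) is strictly positive. -/

import Mathlib

/-!
Put `c = B / (1 - B)`. Since `1 / (1 - B) = 1 + c` and `(1 - B) / (B + x (1 - B)) = 1 / (x + c)`,
the average cost is `F(x) = (x (x - 1) / 2 + (E + x) (1 + c) + c (1 + c)) / (x + c)`, and the
difference `F(x + 1) - F(x)` is a routine computation with fractions over `(x + 1 + c) (x + c)`.
The denominators are positive for `x ≥ 1` because `B < 1` forces `c > -1`.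
-/

noncomputable def avgCost (B E x : ℝ) : ℝ :=
  (1 - B) / (B + x * (1 - B)) * (x * (x - 1) / 2 + (E + x) / (1 - B) + B / (1 - B) ^ 2)

noncomputable def costQuadratic (B E x : ℝ) : ℝ :=
  x ^ 2 / 2 + (1 / 2 + B / (1 - B)) * x - E / (1 - B)

theorem neg_one_lt_div_one_sub {B : ℝ} (hB : B < 1) : -1 < B / (1 - B) := by
  rw [lt_div_iff₀ (sub_pos.2 hB)]
  linarith

theorem add_div_one_sub_pos {B x : ℝ} (hB : B < 1) (hx : 1 ≤ x) : 0 < x + B / (1 - B) := by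
  linarith [neg_one_lt_div_one_sub hB]

theorem avgCost_eq_div {B x : ℝ} (E : ℝ) (hB : B < 1) :
    avgCost B E x =
      (x * (x - 1) / 2 + (E + x) * (1 + B / (1 - B)) + B / (1 - B) * (1 + B / (1 - B))) /
        (x + B / (1 - B)) := by
  have h1B : 1 - B ≠ 0 := (sub_pos.2 hB).ne'
  unfold avgCost
  field_simp
  ring

theorem avgCost_add_one_sub {B x : ℝ} (E : ℝ) (hB : B < 1) (hx : 0 < x + B / (1 - B)) :
    avgCost B E (x + 1) - avgCost B E x =
      costQuadratic B E x / ((x + 1 + B / (1 - B)) * (x + B / (1 - B))) := by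
  have hE_div : E / (1 - B) = E * (1 + B / (1 - B)) := by
    field_simp [(sub_pos.2 hB).ne']
    ring
  rw [avgCost_eq_div E hB, avgCost_eq_div E hB, costQuadratic, hE_div]
  generalize B / (1 - B) = c at hx ⊢
  have hx1 : x + 1 + c ≠ 0 := by linarith
  field_simp
  ring

theorem cost_difference_formula (B E : ℝ) (hB1 : B < 1)
    (F : ℕ → ℝ)
    (hF : ∀ k : ℕ, 1 ≤ k →
      F k = ((1 - B) / (B + k * (1 - B))) *
        ((k : ℝ) * (k - 1) / 2 + (E + k) / (1 - B) + B / (1 - B) ^ 2))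
    (H : ℝ → ℝ)
    (hH : ∀ x : ℝ, H x = x ^ 2 / 2 + (1 / 2 + B / (1 - B)) * x - E / (1 - B)) :
    ∀ k : ℕ, 1 ≤ k →
      F (k + 1) - F k =
        H k / (((k : ℝ) + 1 + B / (1 - B)) * ((k : ℝ) + B / (1 - B))) ∧
      0 < ((k : ℝ) + 1 + B / (1 - B)) * ((k : ℝ) + B / (1 - B)) := by
  intro k hk
  have hk1 : (1 : ℝ) ≤ k := by exact_mod_cast hk
  have hpos : 0 < (k : ℝ) + B / (1 - B) := add_div_one_sub_pos hB1 hk1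
  have hFk : F k = avgCost B E k := hF k hk
  have hFk1 : F (k + 1) = avgCost B E ((k : ℝ) + 1) := by
    rw [hF (k + 1) (by omega)]
    push_cast
    rfl
  refine ⟨?_, mul_pos (add_div_one_sub_pos hB1 (by linarith)) hpos⟩
  rw [hFk1, hFk, avgCost_add_one_sub E hB1 hpos, hH]
  rfl
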